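/- Every representation of a quiver of Dynkin type (in particular type A) over a field, not necessarily finite-dimensional, is a direct sum of finite-dimensional indecomposable representations. -/

import Mathlib

/-!
A string is a family of vectors, one at each vertex of an interval of `0, …, n`, each mapped to
the next or to the previous one by the arrow between them; its span is a thin, hence
finite-dimensional, indecomposable subrepresentation. We decompose the restriction of the
representation to the vertices `0, …, m` into strings by induction on `m`, strengthened so that
the string vectors at `m` contain a basis of every member of a prescribed flag of `V m`.

To cross the edge between `m` and `m + 1` with a flag `L` at `m + 1`: if the arrow `F` points to
`m + 1`, ask at `m` for a flag made of `ker F` and the preimages of `L`. The nonzero images of the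
string vectors at `m` are then independent and compatible with `L`, and they extend to a basis of
`V (m + 1)` adapted to `L` whose remaining vectors start new strings. If the arrow `G` points to
`m`, ask for the images of `L` and `range G`; lift every string vector in `range G` into the
smallest member of `L` whose image contains it, and add a basis of `ker G` adapted to `L`.
Bases of infinite-dimensional spaces come from Zorn's lemma.
-/

universe u

/-- A subrepresentation of a representation of a quiver with underlying graph `Aₙ`
(vertices `0, 1, …, n`; for each `i` the edge between `i` and `i+1` carries a forward
map `f i` and a backward map `g i`, one of which is zero, recording the orientation):
a family of subspaces stable under all the structure maps. -/
def IsSubrep (k : Type u) [Field k] (n : ℕ)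
    (V : Fin (n+1) → Type u) [∀ j, AddCommGroup (V j)] [∀ j, Module k (V j)]
    (f : ∀ i : Fin n, V i.castSucc →ₗ[k] V i.succ)
    (g : ∀ i : Fin n, V i.succ →ₗ[k] V i.castSucc)
    (W : ∀ j, Submodule k (V j)) : Prop :=
  ∀ i : Fin n, (W i.castSucc).map (f i) ≤ W i.succ ∧ (W i.succ).map (g i) ≤ W i.castSucc

open Submodule Set

section LinearAlgebra

variable {k : Type*} [Field k] {X Y : Type u} [AddCommGroup X] [Module k X]
  [AddCommGroup Y] [Module k Y]

theorem exists_adapted_basis_extension {Z : Submodule k X} (L : List (Submodule k X))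
    (hL : L.Pairwise (· ≤ ·)) {S : Set X} (hSZ : S ⊆ Z) (hS : LinearIndepOn k id S)
    (hSL : ∀ W ∈ L, W ⊓ span k S ≤ span k (S ∩ W)) :
    ∃ B, S ⊆ B ∧ B ⊆ Z ∧ LinearIndepOn k id B ∧ span k B = Z ∧
      ∀ W ∈ L, W ⊓ Z ≤ span k (B ∩ W) := by
  induction L generalizing S with
  | nil =>
    obtain ⟨B, hBZ, hSB, hZB, hB⟩ := exists_linearIndepOn_id_extension hS hSZ
    exact ⟨B, hSB, hBZ, hB, le_antisymm (span_le.2 hBZ) fun z hz => hZB hz, by simp⟩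
  | cons W₀ L ih =>
    rw [List.pairwise_cons] at hL
    obtain ⟨C, hCt, hSC, htC, hC⟩ := exists_linearIndepOn_id_extension hS
      (subset_union_left : S ⊆ S ∪ (Z ⊓ W₀ : Submodule k X))
    -- `C \ S` lies in `W₀`, so the part of a vector of `W ⊓ span C` outside `span S` is in `W`
    have key : ∀ W, W₀ ≤ W → W ⊓ span k S ≤ span k (S ∩ W) → W ⊓ span k C ≤ span k (C ∩ W) := by
      rintro W hW hSW x ⟨hxW, hxC⟩
      have hC' : C ⊆ S ∪ (C ∩ W₀) := fun c hc =>
        (hCt hc).imp_right fun h => ⟨hc, (Submodule.mem_inf.1 h).2⟩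
      have hx : x ∈ span k S ⊔ span k (C ∩ W₀) :=
        (span_union (R := k) S (C ∩ W₀)) ▸ span_mono hC' hxC
      obtain ⟨s, hs, c, hc, rfl⟩ := mem_sup.1 hx
      have hcW : c ∈ span k (C ∩ W) := span_mono (inter_subset_inter_right _ hW) hc
      have hsW : s ∈ W := by
        simpa using W.sub_mem hxW (span_le.2 inter_subset_right hcW)
      exact add_mem (span_mono (inter_subset_inter_left _ hSC) (hSW ⟨hsW, hs⟩)) hcW
    obtain ⟨B, hCB, hBZ, hB, hBspan, hBL⟩ := ih hL.2
      (fun c hc => (hCt hc).elim (@hSZ c) fun h => (Submodule.mem_inf.1 h).1) hC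
      fun W hW => key W (hL.1 W hW) (hSL W (List.mem_cons_of_mem _ hW))
    refine ⟨B, hSC.trans hCB, hBZ, hB, hBspan, List.forall_mem_cons.2 ⟨?_, hBL⟩⟩
    calc W₀ ⊓ Z ≤ W₀ ⊓ span k C := le_inf inf_le_left fun z hz => htC (Or.inr (by rwa [inf_comm]))
      _ ≤ span k (C ∩ W₀) := key W₀ le_rfl (hSL W₀ List.mem_cons_self)
      _ ≤ span k (B ∩ W₀) := span_mono (inter_subset_inter_left _ hCB)

/-- Zero entries of `u` are allowed and ignored: string vectors vanish off their support. -/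
structure IsAdaptedBasis {ι : Type*} (u : ι → X) (L : List (Submodule k X)) : Prop where
  linearIndepOn : LinearIndepOn k u {i | u i ≠ 0}
  span_eq_top : span k (range u) = ⊤
  le_span : ∀ W ∈ L, W ≤ span k (range u ∩ W)

namespace IsAdaptedBasis

variable {ι τ : Type*} {u : ι → X} {L : List (Submodule k X)}

theorem of_injOn {B : Set X} (hB : LinearIndepOn k id B) (hBspan : span k B = ⊤)
    (hBL : ∀ W ∈ L, W ≤ span k (B ∩ W)) (hBu : B ⊆ range u) (huB : ∀ i, u i ≠ 0 → u i ∈ B)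
    (hinj : InjOn u {i | u i ≠ 0}) : IsAdaptedBasis u L where
  linearIndepOn := (linearIndepOn_iff_image hinj).2 <| hB.mono <| by
    rintro _ ⟨i, hi, rfl⟩
    exact huB i hi
  span_eq_top := eq_top_iff.2 (hBspan.ge.trans (span_mono hBu))
  le_span W hW := (hBL W hW).trans (span_mono (inter_subset_inter_left _ hBu))

theorem sum_elim_val {x : ι → X} {B T : Set X} (hB : LinearIndepOn k id B)
    (hBspan : span k B = ⊤) (hBL : ∀ W ∈ L, W ≤ span k (B ∩ W)) (hxB : x '' {i | x i ≠ 0} ∪ T = B)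
    (hinj : InjOn x {i | x i ≠ 0}) (hdisj : Disjoint (x '' {i | x i ≠ 0}) T) :
    IsAdaptedBasis (Sum.elim x (Subtype.val : T → X)) L := by
  subst hxB
  refine .of_injOn hB hBspan hBL (union_subset ?_ fun t ht => ⟨.inr ⟨t, ht⟩, rfl⟩) ?_ ?_
  · rintro _ ⟨i, -, rfl⟩
    exact ⟨.inl i, rfl⟩
  · rintro (i | t) hi
    exacts [Or.inl ⟨i, hi, rfl⟩, Or.inr t.2]
  · rintro (i | t) hi (j | t') hj h
    · exact congrArg _ (hinj hi hj h)
    · exact (hdisj.ne_of_mem ⟨i, hi, rfl⟩ t'.2 h).elim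
    · exact (hdisj.ne_of_mem ⟨j, hj, rfl⟩ t.2 h.symm).elim
    · exact congrArg _ (Subtype.ext h)

theorem nil (h : IsAdaptedBasis u L) : IsAdaptedBasis u ([] : List (Submodule k X)) :=
  ⟨h.linearIndepOn, h.span_eq_top, by simp⟩

theorem sum_elim_zero (h : IsAdaptedBasis u L) : IsAdaptedBasis (Sum.elim u (0 : τ → X)) L := by
  have hrange : range u ⊆ range (Sum.elim u (0 : τ → X)) := by
    rintro _ ⟨i, rfl⟩
    exact ⟨.inl i, rfl⟩
  have hsupp : {p | Sum.elim u (0 : τ → X) p ≠ 0} = Sum.inl '' {i | u i ≠ 0} := by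
    ext (i | t) <;> simp
  refine ⟨?_, eq_top_iff.2 (h.span_eq_top.ge.trans (span_mono hrange)), fun W hW =>
    (h.le_span W hW).trans (span_mono (inter_subset_inter_left _ hrange))⟩
  rw [hsupp]
  exact h.linearIndepOn.image_of_comp Sum.inl (Sum.elim u 0)

theorem isInternal_span_singleton (h : IsAdaptedBasis u L) {p : ι → Prop}
    [DecidableEq {i // p i}] (hp : ∀ i, u i ≠ 0 → p i) :
    DirectSum.IsInternal fun i : {i // p i} => k ∙ u i := by
  rw [DirectSum.isInternal_submodule_iff_iSupIndep_and_iSup_eq_top]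
  constructor
  · have : iSupIndep fun i => k ∙ u i := by
      have h₁ : iSupIndep fun i : {i | u i ≠ 0} => k ∙ u i :=
        h.linearIndepOn.iSupIndep_span_singleton
      let e : {i // k ∙ u i ≠ ⊥} ≃ {i | u i ≠ 0} :=
        Equiv.subtypeEquivRight fun i => by simp
      have h₂ := h₁.comp e.injective
      exact iSupIndep_ne_bot.1 h₂
    exact this.comp Subtype.val_injective
  · refine eq_top_iff.2 (h.span_eq_top ▸ span_le.2 ?_)
    rintro _ ⟨i, rfl⟩
    by_cases hi : u i = 0
    · simp [hi]
    · exact mem_iSup_of_mem ⟨i, hp i hi⟩ (mem_span_singleton_self _)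

end IsAdaptedBasis

theorem LinearIndepOn.comp_of_ker_le_span {ι : Type*} {u : ι → X}
    (hu : LinearIndepOn k u {i | u i ≠ 0}) (F : X →ₗ[k] Y)
    (hker : LinearMap.ker F ≤ span k (range u ∩ LinearMap.ker F)) :
    LinearIndepOn k (F ∘ u) {i | F (u i) ≠ 0} := by
  have hAu : {i | F (u i) ≠ 0} ⊆ {i | u i ≠ 0} := fun i hi h0 => hi (by simp [h0])
  have hdisj : Disjoint {i | F (u i) ≠ 0} {i | u i ≠ 0 ∧ F (u i) = 0} :=
    Set.disjoint_left.2 fun i hi hi' => hi hi'.2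
  have hspan := ((linearIndepOn_union_iff hdisj).1 (hu.mono
    (union_subset hAu fun i hi => hi.1))).2.2
  refine LinearIndependent.map (hu.mono hAu) ?_
  rw [← image_eq_range]
  refine hspan.mono_right (hker.trans (span_le.2 ?_))
  rintro _ ⟨⟨i, rfl⟩, hi⟩
  by_cases h0 : u i = 0
  · simp [h0]
  · exact subset_span ⟨i, ⟨h0, hi⟩, rfl⟩

theorem pairwise_ker_cons_map_comap (F : X →ₗ[k] Y) {L : List (Submodule k Y)}
    (hL : L.Pairwise (· ≤ ·)) : (LinearMap.ker F :: L.map (comap F)).Pairwise (· ≤ ·) :=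
  List.pairwise_cons.2 ⟨by simp [LinearMap.ker_le_comap], hL.map _ fun _ _ => comap_mono⟩

theorem pairwise_map_append_range (G : Y →ₗ[k] X) {L : List (Submodule k Y)}
    (hL : L.Pairwise (· ≤ ·)) : (L.map (map G) ++ [LinearMap.range G]).Pairwise (· ≤ ·) :=
  List.pairwise_append.2 ⟨hL.map _ fun _ _ => map_mono, List.pairwise_singleton _ _,
    by simp [LinearMap.map_le_range]⟩

theorem exists_preimage_mem_of_chain (G : Y →ₗ[k] X) {L : List (Submodule k Y)}
    (hL : L.Pairwise (· ≤ ·)) {x : X} (hx : x ∈ LinearMap.range G) :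
    ∃ y, G y = x ∧ ∀ W ∈ L, x ∈ W.map G → y ∈ W := by
  classical
  -- the first member of the chain whose image contains `x` is the smallest one
  match h : L.filter (fun W => x ∈ W.map G) with
  | [] =>
    obtain ⟨y, rfl⟩ := hx
    refine ⟨y, rfl, fun W hW hxW => ?_⟩
    have : W ∈ L.filter (fun W => G y ∈ W.map G) := List.mem_filter.2 ⟨hW, by simpa using hxW⟩
    rw [h] at this
    simp at this
  | W₀ :: L' =>
    have hmem : ∀ W, W ∈ W₀ :: L' ↔ W ∈ L ∧ x ∈ W.map G := by
      simp [← h, List.mem_filter]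
    obtain ⟨y, hyW₀, rfl⟩ := ((hmem W₀).1 List.mem_cons_self).2
    have hmin := List.pairwise_cons.1 (h ▸ hL.filter _ : (W₀ :: L').Pairwise (· ≤ ·))
    refine ⟨y, rfl, fun W hW hxW => ?_⟩
    rcases List.mem_cons.1 ((hmem W).2 ⟨hW, hxW⟩) with rfl | hW'
    · exact hyW₀
    · exact hmin.1 W hW' hyW₀

theorem exists_lifts_of_chain (G : Y →ₗ[k] X) {L : List (Submodule k Y)}
    (hL : L.Pairwise (· ≤ ·)) {ι : Type*} (u : ι → X) :
    ∃ x : ι → Y, (∀ i, x i = 0 ∨ G (x i) = u i ∧ u i ≠ 0) ∧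
      (∀ i, u i ∈ LinearMap.range G → G (x i) = u i) ∧
      ∀ i, ∀ W ∈ L, u i ∈ W.map G → x i ∈ W := by
  have hlift : ∀ i, ∃ z : Y, (z = 0 ∨ G z = u i ∧ u i ≠ 0) ∧
      (u i ∈ LinearMap.range G → G z = u i) ∧ ∀ W ∈ L, u i ∈ W.map G → z ∈ W := by
    intro i
    by_cases h0 : u i = 0
    · exact ⟨0, Or.inl rfl, fun _ => by simp [h0], fun W _ _ => W.zero_mem⟩
    by_cases hr : u i ∈ LinearMap.range G
    · obtain ⟨z, hz, hzW⟩ := exists_preimage_mem_of_chain G hL hr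
      exact ⟨z, Or.inr ⟨hz, h0⟩, fun _ => hz, hzW⟩
    · exact ⟨0, Or.inl rfl, fun h => absurd h hr,
        fun W _ h => absurd (LinearMap.map_le_range h) hr⟩
  choose x hx₀ hxr hxW using hlift
  exact ⟨x, hx₀, hxr, hxW⟩

theorem le_span_union_of_lifts (G : Y →ₗ[k] X) {ι : Type*} {u : ι → X} {S T : Set Y}
    {W : Submodule k Y} (hWu : W.map G ≤ span k (range u ∩ W.map G))
    (hS : ∀ i, u i ∈ W.map G → u i ≠ 0 → ∃ y ∈ S ∩ W, G y = u i)
    (hT : W ⊓ LinearMap.ker G ≤ span k (T ∩ W)) : W ≤ span k ((S ∪ T) ∩ W) := by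
  intro y hy
  have hGy : G y ∈ map G (span k (S ∩ W)) := by
    rw [map_span]
    refine span_le.2 ?_ (hWu (mem_map_of_mem hy))
    rintro _ ⟨⟨i, rfl⟩, hi⟩
    by_cases h0 : u i = 0
    · rw [h0]
      exact zero_mem _
    obtain ⟨z, hz, hGz⟩ := hS i hi h0
    exact subset_span ⟨z, hz, hGz⟩
  obtain ⟨z, hz, hGz⟩ := hGy
  have hyz : y - z ∈ span k (T ∩ W) :=
    hT ⟨W.sub_mem hy (span_le.2 inter_subset_right hz), by simp [LinearMap.mem_ker, hGz]⟩
  simpa using add_mem (span_mono (inter_subset_inter_left _ subset_union_left) hz)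
    (span_mono (inter_subset_inter_left _ subset_union_right) hyz)

/-- `k ∙ x ⇄ k ∙ y` is a subrepresentation of `X ⇄ Y`, connected when `x` and `y` are nonzero. -/
def IsStringEdge (F : X →ₗ[k] Y) (G : Y →ₗ[k] X) (x : X) (y : Y) : Prop :=
  F x ∈ k ∙ y ∧ G y ∈ k ∙ x ∧ (x ≠ 0 → y ≠ 0 → F x = y ∨ G y = x)

theorem isStringEdge_zero_left {F : X →ₗ[k] Y} {G : Y →ₗ[k] X} {y : Y} (hy : G y = 0) :
    IsStringEdge F G 0 y :=
  ⟨by simp, by simp [hy], fun h => absurd rfl h⟩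

/-- The strings with vectors `u` in `X` continue across the edge `X ⇄ Y`: string `i` takes the
value `y (.inl i)` in `Y`, and a new string `t` starts there with `y (.inr t)`. -/
structure IsStringExtension (F : X →ₗ[k] Y) (G : Y →ₗ[k] X) {ι τ : Type*} (u : ι → X)
    (y : ι ⊕ τ → Y) (L : List (Submodule k Y)) : Prop where
  isAdaptedBasis : IsAdaptedBasis y L
  eq_zero : ∀ i, u i = 0 → y (.inl i) = 0
  isStringEdge : ∀ p, IsStringEdge F G (Sum.elim u 0 p) (y p)

theorem exists_isStringExtension_of_sink (F : X →ₗ[k] Y) {L : List (Submodule k Y)}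
    (hL : L.Pairwise (· ≤ ·)) {ι : Type*} {u : ι → X}
    (hu : IsAdaptedBasis u (LinearMap.ker F :: L.map (comap F))) :
    ∃ (τ : Type u) (y : ι ⊕ τ → Y), IsStringExtension F 0 u y L := by
  have hA := hu.linearIndepOn.comp_of_ker_le_span F (hu.le_span _ List.mem_cons_self)
  set S := (F ∘ u) '' {i | F (u i) ≠ 0}
  have hSL : ∀ W ∈ L, W ⊓ span k S ≤ span k (S ∩ W) := by
    rintro W hW z ⟨hzW, hzS⟩
    obtain ⟨x, rfl⟩ : z ∈ LinearMap.range F :=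
      span_le.2 (by rintro _ ⟨i, -, rfl⟩; exact ⟨u i, rfl⟩) hzS
    have hx : x ∈ span k (range u ∩ W.comap F) :=
      hu.le_span _ (List.mem_cons_of_mem _ (List.mem_map_of_mem hW)) hzW
    have hFx := mem_map_of_mem (f := F) hx
    rw [map_span] at hFx
    refine span_le.2 ?_ hFx
    rintro _ ⟨_, ⟨⟨i, rfl⟩, hiW⟩, rfl⟩
    by_cases h0 : F (u i) = 0
    · simp [h0]
    · exact subset_span ⟨⟨i, h0, rfl⟩, hiW⟩
  obtain ⟨B, hSB, -, hB, hBspan, hBL⟩ := exists_adapted_basis_extension (Z := ⊤) L hL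
    (fun _ _ => trivial) hA.id_image hSL
  refine ⟨↥(B \ S), Sum.elim (F ∘ u) Subtype.val, ⟨.sum_elim_val hB hBspan
    (fun W hW => by simpa using hBL W hW) (union_sdiff_cancel hSB) hA.injOn disjoint_sdiff_right,
    fun i hi => by simp [hi], ?_⟩⟩
  rintro (i | t)
  · exact ⟨mem_span_singleton_self _, by simp, fun _ _ => Or.inl rfl⟩
  · exact isStringEdge_zero_left rfl

theorem exists_isStringExtension_of_source (G : Y →ₗ[k] X) {L : List (Submodule k Y)}
    (hL : L.Pairwise (· ≤ ·)) {ι : Type*} {u : ι → X}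
    (hu : IsAdaptedBasis u (L.map (map G) ++ [LinearMap.range G])) :
    ∃ (τ : Type u) (y : ι ⊕ τ → Y), IsStringExtension 0 G u y L := by
  obtain ⟨x, hx₀, hxr, hxW⟩ := exists_lifts_of_chain G hL u
  set N := {i | x i ≠ 0}
  have hxG : ∀ i ∈ N, G (x i) = u i ∧ u i ≠ 0 := fun i hi => (hx₀ i).resolve_left hi
  have hGN : LinearIndepOn k (G ∘ x) N :=
    (hu.linearIndepOn.mono fun i hi => (hxG i hi).2).congr fun i hi => (hxG i hi).1.symm
  obtain ⟨Bk, -, hBkG, hBk, hBkspan, hBkL⟩ := exists_adapted_basis_extension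
    (Z := LinearMap.ker G) L hL (empty_subset _) (linearIndepOn_empty k id) (by simp)
  have hlift : ∀ W : Submodule k Y, (∀ i, u i ∈ W.map G → x i ∈ W) →
      ∀ i, u i ∈ W.map G → u i ≠ 0 → ∃ y ∈ x '' N ∩ W, G y = u i := fun W hW i hi h0 => by
    have hxi := hxr i (LinearMap.map_le_range hi)
    exact ⟨x i, ⟨⟨i, fun h => h0 (by rw [← hxi, h, map_zero]), rfl⟩, hW i hi⟩, hxi⟩
  have hB : LinearIndepOn k id (x '' N ∪ Bk) := (hGN.of_comp G).id_image.id_union hBk <| by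
    rw [hBkspan, image_eq_range]
    exact Submodule.range_ker_disjoint (v := fun i : N => x i) hGN
  have hBspan : span k (x '' N ∪ Bk) = ⊤ := eq_top_iff.2 <| by
    simpa using le_span_union_of_lifts G (W := ⊤) (hu.le_span _ (by simp))
      (hlift ⊤ fun _ _ => trivial) (by simp [hBkspan])
  have hBL : ∀ W ∈ L, W ≤ span k ((x '' N ∪ Bk) ∩ W) := fun W hW =>
    le_span_union_of_lifts G (hu.le_span _ (List.mem_append_left _ (List.mem_map_of_mem hW)))
      (hlift W fun i => hxW i W hW) (hBkL W hW)
  have hdisj : Disjoint (x '' N) Bk := by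
    refine Set.disjoint_left.2 ?_
    rintro _ ⟨i, hi, rfl⟩ hb
    exact (hxG i hi).2 (by rw [← (hxG i hi).1]; exact hBkG hb)
  refine ⟨↥Bk, Sum.elim x Subtype.val, ⟨.sum_elim_val hB hBspan hBL rfl (hGN.of_comp G).injOn
    hdisj, fun i h => (hx₀ i).resolve_right fun h' => h'.2 h, ?_⟩⟩
  rintro (i | t)
  · refine ⟨by simp, ?_, fun _ hx => Or.inr (hxG i hx).1⟩
    rcases hx₀ i with h | h
    · simp [h]
    · exact h.1 ▸ mem_span_singleton_self _
  · exact isStringEdge_zero_left (hBkG t.2)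

theorem mem_or_mem_of_sup_eq_span_singleton {U U' : Submodule k X} {x : X}
    (hsup : U ⊔ U' = k ∙ x) : x ∈ U ∨ x ∈ U' := by
  obtain ⟨a, ha, b, hb, hab⟩ := mem_sup.1 (hsup ▸ mem_span_singleton_self x)
  obtain ⟨c, rfl⟩ := mem_span_singleton.1 (hsup ▸ mem_sup_left ha : a ∈ k ∙ x)
  by_cases hc : c = 0
  · right
    rw [hc, zero_smul, zero_add] at hab
    exact hab ▸ hb
  · left
    simpa [smul_smul, hc] using U.smul_mem c⁻¹ ha

theorem eq_bot_of_mem_of_sup_eq_span_singleton {U U' : Submodule k X} {x : X} (hx : x ∈ U)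
    (hsup : U ⊔ U' = k ∙ x) (hinf : U ⊓ U' = ⊥) : U' = ⊥ :=
  eq_bot_iff.2 <| hinf ▸ le_inf (le_sup_right.trans (hsup.trans_le
    ((span_singleton_le_iff_mem _ _).2 hx))) le_rfl

end LinearAlgebra

theorem Set.OrdConnected.iff_of_forall_succ {n : ℕ} {S : Set (Fin (n + 1))} (hS : S.OrdConnected)
    {P : Fin (n + 1) → Prop}
    (hP : ∀ i : Fin n, i.castSucc ∈ S → i.succ ∈ S → (P i.castSucc ↔ P i.succ))
    {a b : Fin (n + 1)} (ha : a ∈ S) (hb : b ∈ S) : P a ↔ P b := by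
  wlog hab : a ≤ b generalizing a b
  · exact (this hb ha (le_of_not_ge hab)).symm
  induction b using Fin.induction with
  | zero => rw [Fin.le_zero_iff.1 hab]
  | succ i ih =>
    rcases hab.eq_or_lt with rfl | hlt
    · rfl
    have hai : a ≤ i.castSucc := Fin.le_castSucc_iff.2 hlt
    have hi : i.castSucc ∈ S := hS.out ha hb ⟨hai, Fin.castSucc_lt_succ.le⟩
    exact (ih hi hai).trans (hP i hi hb)

theorem ordConnected_support_update {n : ℕ} {V : Fin (n + 1) → Type*} [∀ j, Zero (V j)]
    {w : ∀ j, V j} {i : Fin n} (hw : {j | w j ≠ 0}.OrdConnected)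
    (hwi : ∀ j, i.castSucc < j → w j = 0) {y : V i.succ}
    (hy : y ≠ 0 → w i.castSucc ≠ 0 ∨ ∀ j, w j = 0) :
    {j | Function.update w i.succ y j ≠ 0}.OrdConnected := by
  refine ⟨fun a ha b hb c hc => ?_⟩
  simp only [mem_ofPred_eq] at ha hb ⊢
  have hle : ∀ j, Function.update w i.succ y j ≠ 0 → j ≤ i.succ := fun j hj => by
    by_contra h
    rw [not_le] at h
    exact hj (by rw [Function.update_of_ne h.ne']; exact hwi j (Fin.castSucc_lt_succ.trans h))
  rcases eq_or_ne c i.succ with rfl | hci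
  · obtain rfl := le_antisymm (hle b hb) hc.2
    exact hb
  rw [Function.update_of_ne hci]
  have hci' : c ≤ i.castSucc :=
    Fin.le_castSucc_iff.2 (lt_of_le_of_ne (hc.2.trans (hle b hb)) hci)
  have hai : a ≠ i.succ := ((hc.1.trans hci').trans_lt Fin.castSucc_lt_succ).ne
  rw [Function.update_of_ne hai] at ha
  rcases eq_or_ne b i.succ with rfl | hbi
  · rw [Function.update_self] at hb
    rcases hy hb with h | h
    · exact hw.out ha h ⟨hc.1, hci'⟩
    · exact absurd (h a) ha
  · rw [Function.update_of_ne hbi] at hb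
    exact hw.out ha hb hc

section Quiver

variable {k : Type u} [Field k] {n : ℕ}
  {V : Fin (n + 1) → Type u} [∀ j, AddCommGroup (V j)] [∀ j, Module k (V j)]
  (f : ∀ i : Fin n, V i.castSucc →ₗ[k] V i.succ) (g : ∀ i : Fin n, V i.succ →ₗ[k] V i.castSucc)

/-- The strings `v s`, which vanish beyond `m`, decompose the restriction of the representation to
the vertices `0, …, m`; their vectors at `m` contain a basis of each member of the flag `L`. -/
structure StringFamily (m : Fin (n + 1)) (L : List (Submodule k (V m))) where
  σ : Type u
  v : σ → ∀ j, V j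
  eq_zero : ∀ s j, m < j → v s j = 0
  ordConnected : ∀ s, {j | v s j ≠ 0}.OrdConnected
  isStringEdge : ∀ s (i : Fin n), i.succ ≤ m →
    IsStringEdge (f i) (g i) (v s i.castSucc) (v s i.succ)
  isAdaptedBasis : ∀ j ≤ m, IsAdaptedBasis (fun s => v s j) ([] : List (Submodule k (V j)))
  le_span : ∀ W ∈ L, W ≤ span k (range (fun s => v s m) ∩ W)

variable {f g}

theorem StringFamily.isAdaptedBasis_self {m : Fin (n + 1)} {L : List (Submodule k (V m))}
    (D : StringFamily f g m L) : IsAdaptedBasis (fun s => D.v s m) L :=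
  ⟨(D.isAdaptedBasis m le_rfl).linearIndepOn, (D.isAdaptedBasis m le_rfl).span_eq_top, D.le_span⟩

theorem exists_stringFamily_zero (L : List (Submodule k (V 0))) (hL : L.Pairwise (· ≤ ·)) :
    Nonempty (StringFamily f g 0 L) := by
  obtain ⟨B, -, -, hB, hBspan, hBL⟩ := exists_adapted_basis_extension (Z := ⊤) L hL
    (empty_subset _) (linearIndepOn_empty k id) (by simp)
  have hbasis : ∀ L' : List (Submodule k (V 0)), (∀ W ∈ L', W ≤ span k (B ∩ W)) →
      IsAdaptedBasis (fun b : B => (b : V 0)) L' := fun L' hL' =>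
    .of_injOn hB hBspan hL' (by simp) (fun b _ => b.2) Subtype.val_injective.injOn
  have hsupp : ∀ b : B, {j | Pi.single 0 (b : V 0) j ≠ 0} = {0} := fun b => by
    ext j
    rcases eq_or_ne j 0 with rfl | hj
    · simpa using fun h => hB.zero_notMem_image ⟨b, b.2, h⟩
    · simp [hj]
  refine ⟨⟨B, fun b => Pi.single 0 (b : V 0), fun b j hj => Pi.single_eq_of_ne hj.ne' _,
    fun b => hsupp b ▸ ordConnected_singleton, fun b i hi => absurd hi (Fin.succ_pos i).not_ge,
    fun j hj => ?_, ?_⟩⟩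
  · obtain rfl := Fin.le_zero_iff.1 hj
    simpa using hbasis [] (by simp)
  · simpa using (hbasis L (by simpa using hBL)).le_span

theorem StringFamily.exists_succ {i : Fin n} {K : List (Submodule k (V i.castSucc))}
    {L : List (Submodule k (V i.succ))} (D : StringFamily f g i.castSucc K) {τ : Type u}
    {y : D.σ ⊕ τ → V i.succ}
    (hy : IsStringExtension (f i) (g i) (fun s => D.v s i.castSucc) y L) :
    Nonempty (StringFamily f g i.succ L) := by
  set c : D.σ ⊕ τ → ∀ j, V j := Sum.elim D.v 0
  have hc_above : ∀ p j, i.castSucc < j → c p j = 0 := by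
    rintro (s | t) j hj
    exacts [D.eq_zero s j hj, rfl]
  have hc_col : ∀ j, (fun p => c p j) = Sum.elim (fun s => D.v s j) 0 := fun j => by
    funext p
    rcases p with s | t <;> rfl
  set v : D.σ ⊕ τ → ∀ j, V j := fun p => Function.update (c p) i.succ (y p)
  have hv_succ : (fun p => v p i.succ) = y := funext fun p => Function.update_self ..
  have hv_ne : ∀ p j, j ≠ i.succ → v p j = c p j := fun p j hj => Function.update_of_ne hj ..
  refine ⟨⟨D.σ ⊕ τ, v, fun p j hj => ?_, fun p => ?_, fun p e he => ?_, fun j hj => ?_, ?_⟩⟩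
  · rw [hv_ne p j hj.ne']
    exact hc_above p j (Fin.castSucc_lt_succ.trans hj)
  · refine ordConnected_support_update ?_ (hc_above p) ?_
    · rcases p with s | t
      · exact D.ordConnected s
      · simpa [c] using ordConnected_empty
    · rcases p with s | t
      · exact fun hy0 => Or.inl fun h => hy0 (hy.eq_zero s h)
      · exact fun _ => Or.inr fun _ => rfl
  · rcases (Fin.succ_le_succ_iff.1 he).eq_or_lt with rfl | hlt
    · rw [hv_ne p _ Fin.castSucc_lt_succ.ne, show v p e.succ = y p from Function.update_self ..]
      rcases p with s | t
      exacts [hy.isStringEdge (.inl s), hy.isStringEdge (.inr t)]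
    · rw [hv_ne p _ (Fin.castSucc_lt_succ.trans (Fin.succ_lt_succ_iff.2 hlt)).ne,
        hv_ne p _ (Fin.succ_lt_succ_iff.2 hlt).ne]
      rcases p with s | t
      · exact D.isStringEdge s e (Fin.succ_le_castSucc_iff.2 hlt)
      · exact isStringEdge_zero_left (map_zero _)
  · rcases hj.eq_or_lt with rfl | hlt
    · rw [hv_succ]
      exact hy.isAdaptedBasis.nil
    · have hcol : (fun p => v p j) = fun p => c p j := funext fun p => hv_ne p j hlt.ne
      rw [hcol, hc_col]
      exact (D.isAdaptedBasis j (Fin.le_castSucc_iff.2 hlt)).sum_elim_zero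
  · rw [hv_succ]
    exact hy.isAdaptedBasis.le_span

theorem exists_stringFamily (horient : ∀ i, f i = 0 ∨ g i = 0) (m : Fin (n + 1)) :
    ∀ L : List (Submodule k (V m)), L.Pairwise (· ≤ ·) → Nonempty (StringFamily f g m L) := by
  induction m using Fin.induction with
  | zero => exact exists_stringFamily_zero
  | succ i ih =>
    intro L hL
    rcases horient i with hf | hg
    · obtain ⟨D⟩ := ih _ (pairwise_map_append_range (g i) hL)
      obtain ⟨τ, y, hy⟩ := exists_isStringExtension_of_source (g i) hL D.isAdaptedBasis_self
      exact D.exists_succ (hf ▸ hy)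
    · obtain ⟨D⟩ := ih _ (pairwise_ker_cons_map_comap (f i) hL)
      obtain ⟨τ, y, hy⟩ := exists_isStringExtension_of_sink (f i) hL D.isAdaptedBasis_self
      exact D.exists_succ (hg ▸ hy)

theorem isSubrep_span_singleton {w : ∀ j, V j}
    (hw : ∀ i, IsStringEdge (f i) (g i) (w i.castSucc) (w i.succ)) :
    IsSubrep k n V f g fun j => k ∙ w j := fun i => by
  simp only [map_span, image_singleton, span_singleton_le_iff_mem]
  exact ⟨(hw i).1, (hw i).2.1⟩

theorem IsStringEdge.not_mem_and_mem {w : ∀ j, V j} {i : Fin n}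
    (hw : IsStringEdge (f i) (g i) (w i.castSucc) (w i.succ)) (h₁ : w i.castSucc ≠ 0)
    (h₂ : w i.succ ≠ 0) {U U' : ∀ j, Submodule k (V j)} (hU : IsSubrep k n V f g U)
    (hU' : IsSubrep k n V f g U') (hinf : ∀ j, U j ⊓ U' j = ⊥) :
    ¬ (w i.castSucc ∈ U i.castSucc ∧ w i.succ ∈ U' i.succ) := by
  rintro ⟨hc, hs⟩
  rcases hw.2.2 h₁ h₂ with h | h
  · have : w i.succ ∈ U i.succ ⊓ U' i.succ := ⟨h ▸ (hU i).1 (mem_map_of_mem hc), hs⟩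
    rw [hinf] at this
    exact h₂ ((mem_bot k).1 this)
  · have : w i.castSucc ∈ U i.castSucc ⊓ U' i.castSucc := ⟨hc, h ▸ (hU' i).2 (mem_map_of_mem hs)⟩
    rw [hinf] at this
    exact h₁ ((mem_bot k).1 this)

theorem indecomposable_span_singleton {w : ∀ j, V j} (hconn : {j | w j ≠ 0}.OrdConnected)
    (hw : ∀ i, IsStringEdge (f i) (g i) (w i.castSucc) (w i.succ))
    {U U' : ∀ j, Submodule k (V j)} (hU : IsSubrep k n V f g U) (hU' : IsSubrep k n V f g U')
    (hsup : ∀ j, U j ⊔ U' j = k ∙ w j) (hinf : ∀ j, U j ⊓ U' j = ⊥) :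
    (∀ j, U j = ⊥) ∨ ∀ j, U' j = ⊥ := by
  have hmem : ∀ j, w j ∈ U j ∨ w j ∈ U' j := fun j => mem_or_mem_of_sup_eq_span_singleton (hsup j)
  have hinf' : ∀ j, U' j ⊓ U j = ⊥ := fun j => inf_comm (U j) (U' j) ▸ hinf j
  have hstep : ∀ i : Fin n, i.castSucc ∈ {j | w j ≠ 0} → i.succ ∈ {j | w j ≠ 0} →
      (w i.castSucc ∈ U i.castSucc ↔ w i.succ ∈ U i.succ) := fun i h₁ h₂ =>
    ⟨fun hc => (hmem _).resolve_right fun hs =>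
      (hw i).not_mem_and_mem h₁ h₂ hU hU' hinf ⟨hc, hs⟩,
     fun hs => (hmem _).resolve_right fun hc =>
      (hw i).not_mem_and_mem h₁ h₂ hU' hU hinf' ⟨hc, hs⟩⟩
  by_cases h : ∃ j₀, w j₀ ≠ 0 ∧ w j₀ ∈ U j₀
  · obtain ⟨j₀, hj₀, hU₀⟩ := h
    refine Or.inr fun j => eq_bot_of_mem_of_sup_eq_span_singleton ?_ (hsup j) (hinf j)
    by_cases hj : w j = 0
    · rw [hj]
      exact zero_mem _
    · exact (hconn.iff_of_forall_succ (P := fun j => w j ∈ U j) hstep hj₀ hj).1 hU₀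
  · simp only [not_exists, not_and] at h
    refine Or.inl fun j => eq_bot_of_mem_of_sup_eq_span_singleton ?_
      ((sup_comm (U' j) (U j)).trans (hsup j)) (hinf' j)
    by_cases hj : w j = 0
    · rw [hj]
      exact zero_mem _
    · exact (hmem j).resolve_left (h j hj)

end Quiver

/-- Every representation (not necessarily finite-dimensional) of a quiver whose underlying
graph is a Dynkin diagram of type `Aₙ` (any orientation, encoded by the requirement that for
each edge one of the two maps vanishes) is a direct sum of finite-dimensional indecomposable
subrepresentations. -/
theorem stmt19 (k : Type u) [Field k] (n : ℕ)
    (V : Fin (n+1) → Type u) [∀ j, AddCommGroup (V j)] [∀ j, Module k (V j)]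
    (f : ∀ i : Fin n, V i.castSucc →ₗ[k] V i.succ)
    (g : ∀ i : Fin n, V i.succ →ₗ[k] V i.castSucc)
    (horient : ∀ i : Fin n, f i = 0 ∨ g i = 0) :
    ∃ (ι : Type u) (_ : DecidableEq ι) (W : ι → ∀ j, Submodule k (V j)),
      -- each summand is a subrepresentation ...
      (∀ c, IsSubrep k n V f g (W c)) ∧
      -- ... the summands decompose each vertex space as an (internal) direct sum ...
      (∀ j : Fin (n+1), DirectSum.IsInternal (fun c => W c j)) ∧
      -- ... each summand is finite-dimensional ...
      (∀ c j, FiniteDimensional k (W c j)) ∧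
      -- ... and each summand is an indecomposable representation.
      (∀ c, (¬ ∀ j, W c j = ⊥) ∧
        ∀ (U U' : ∀ j, Submodule k (V j)), IsSubrep k n V f g U → IsSubrep k n V f g U' →
          (∀ j, U j ⊔ U' j = W c j) → (∀ j, U j ⊓ U' j = ⊥) →
          (∀ j, U j = ⊥) ∨ (∀ j, U' j = ⊥)) := by
  classical
  obtain ⟨D⟩ := exists_stringFamily horient (Fin.last n) [] List.Pairwise.nil
  have hw : ∀ s i, IsStringEdge (f i) (g i) (D.v s i.castSucc) (D.v s i.succ) := fun s i =>
    D.isStringEdge s i (Fin.le_last _)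
  refine ⟨{s // D.v s ≠ 0}, inferInstance, fun s j => k ∙ D.v s j,
    fun s => isSubrep_span_singleton (hw s), fun j => ?_, fun _ _ => inferInstance,
    fun s => ⟨fun h => s.2 (funext fun j => span_singleton_eq_bot.1 (h j)),
      fun U U' => indecomposable_span_singleton (D.ordConnected s) (hw s)⟩⟩
  exact (D.isAdaptedBasis j (Fin.le_last j)).isInternal_span_singleton
    fun s hs h => hs (congrFun h j)
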